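/- For fixed y ∈ [0,1], the function x ↦ G₋(x,y) is convex on [0,1], where G₋(x,y) = 0 for x ≤ 1−y and G₋(x,y) = x + (1−2x)(1−y) − 2√(x(1−x)y(1−y)) for x > 1−y. -/

import Mathlib

noncomputable def gMinus (x y : ℝ) : ℝ := x + (1 - 2*x)*(1 - y) - 2*Real.sqrt (x*(1 - x)*y*(1 - y))
noncomputable def GMinus (x y : ℝ) : ℝ := if x > 1 - y then gMinus x y else 0

/-!
Write `c = 1 - y`. In `x`, `g₋` is affine minus the nonnegative multiple `2√(y(1-y))` of the
concave function `√(x(1-x))`, hence convex. It also factors as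
`g₋(x,y) = (√(xy) - √((1-x)(1-y)))²`, which vanishes at `x = c` and is nondecreasing on `[c,1]`.
So `G₋(x,y) = g₋(max x c, y)` is a nondecreasing convex function of the convex function `max x c`.
-/

open Set Real

theorem image_max_const_Icc {α : Type*} [LinearOrder α] {a b c : α} (hac : a ≤ c) (hcb : c ≤ b) :
    (fun x => max x c) '' Icc a b = Icc c b := by
  ext z
  constructor
  · rintro ⟨x, hx, rfl⟩
    exact ⟨le_max_right x c, max_le hx.2 hcb⟩
  · intro hz
    exact ⟨z, ⟨hac.trans hz.1, hz.2⟩, max_eq_left hz.1⟩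

theorem ConvexOn.comp_max_const {𝕜 β : Type*} [Field 𝕜] [LinearOrder 𝕜] [IsStrictOrderedRing 𝕜]
    [AddCommMonoid β] [PartialOrder β] [SMul 𝕜 β] {a b c : 𝕜} {g : 𝕜 → β}
    (hac : a ≤ c) (hcb : c ≤ b) (hg : ConvexOn 𝕜 (Icc c b) g) (hmono : MonotoneOn g (Icc c b)) :
    ConvexOn 𝕜 (Icc a b) fun x => g (max x c) := by
  have hmax : ConvexOn 𝕜 (Icc a b) fun x => max x c :=
    (convexOn_id (convex_Icc a b)).sup (convexOn_const c (convex_Icc a b))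
  rw [← image_max_const_Icc hac hcb] at hg hmono
  exact hg.comp hmax hmono

theorem concaveOn_mul_one_sub : ConcaveOn ℝ univ fun x : ℝ => x * (1 - x) := by
  refine ⟨convex_univ, fun x _ z _ a b ha hb hab => ?_⟩
  simp only [smul_eq_mul]
  have gap : (a*x + b*z) * (1 - (a*x + b*z)) - (a * (x*(1-x)) + b * (z*(1-z)))
      = a * b * (x - z)^2 := by
    linear_combination (-(a*x^2 + b*z^2)) * hab
  nlinarith [mul_nonneg (mul_nonneg ha hb) (sq_nonneg (x - z))]

theorem concaveOn_sqrt_mul_one_sub : ConcaveOn ℝ (Icc 0 1) fun x : ℝ => √(x * (1 - x)) := by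
  refine ⟨convex_Icc 0 1, fun x hx z hz a b ha hb hab => ?_⟩
  have hx0 : 0 ≤ x * (1 - x) := mul_nonneg hx.1 (sub_nonneg.2 hx.2)
  have hz0 : 0 ≤ z * (1 - z) := mul_nonneg hz.1 (sub_nonneg.2 hz.2)
  calc a • √(x * (1 - x)) + b • √(z * (1 - z))
      ≤ √(a • (x * (1 - x)) + b • (z * (1 - z))) :=
        strictConcaveOn_sqrt.concaveOn.2 hx0 hz0 ha hb hab
    _ ≤ √((a • x + b • z) * (1 - (a • x + b • z))) :=
        sqrt_le_sqrt (concaveOn_mul_one_sub.2 trivial trivial ha hb hab)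

theorem convexOn_gMinus {y : ℝ} (hy : y ∈ Icc (0:ℝ) 1) :
    ConvexOn ℝ (Icc 0 1) fun x => gMinus x y := by
  have hyy : 0 ≤ y * (1 - y) := mul_nonneg hy.1 (sub_nonneg.2 hy.2)
  have haffine : ConvexOn ℝ (Icc 0 1) fun x : ℝ => x + (1 - 2*x) * (1 - y) := by
    refine ⟨convex_Icc 0 1, fun x _ z _ a b _ _ hab => le_of_eq ?_⟩
    simp only [smul_eq_mul]
    linear_combination (y - 1) * hab
  have hconcave : ConcaveOn ℝ (Icc 0 1) fun x : ℝ => (2 * √(y * (1 - y))) • √(x * (1 - x)) :=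
    concaveOn_sqrt_mul_one_sub.smul (by positivity)
  refine (haffine.sub hconcave).congr fun x _ => ?_
  have hsplit : x * (1 - x) * y * (1 - y) = y * (1 - y) * (x * (1 - x)) := by ring
  simp only [Pi.sub_apply, gMinus, hsplit, sqrt_mul hyy, smul_eq_mul]
  ring

theorem gMinus_eq_sq {x y : ℝ} (hx : x ∈ Icc (0:ℝ) 1) (hy : y ∈ Icc (0:ℝ) 1) :
    gMinus x y = (√(x * y) - √((1 - x) * (1 - y)))^2 := by
  have hxy : 0 ≤ x * y := mul_nonneg hx.1 hy.1
  have hxy' : 0 ≤ (1 - x) * (1 - y) := mul_nonneg (sub_nonneg.2 hx.2) (sub_nonneg.2 hy.2)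
  have hprod : √(x * (1 - x) * y * (1 - y)) = √(x * y) * √((1 - x) * (1 - y)) := by
    rw [← sqrt_mul hxy]; ring_nf
  rw [gMinus, sub_sq, sq_sqrt hxy, sq_sqrt hxy', hprod]
  ring

theorem monotoneOn_gMinus {y : ℝ} (hy : y ∈ Icc (0:ℝ) 1) :
    MonotoneOn (fun x => gMinus x y) (Icc (1 - y) 1) := by
  intro x₁ hx₁ x₂ hx₂ hle
  have hx₁' : x₁ ∈ Icc (0:ℝ) 1 := ⟨by linarith [hx₁.1, hy.2], hx₁.2⟩
  have hx₂' : x₂ ∈ Icc (0:ℝ) 1 := ⟨by linarith [hx₂.1, hy.2], hx₂.2⟩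
  simp only [gMinus_eq_sq hx₁' hy, gMinus_eq_sq hx₂' hy]
  have hnonneg : 0 ≤ √(x₁ * y) - √((1 - x₁) * (1 - y)) :=
    sub_nonneg.2 (sqrt_le_sqrt (by nlinarith [hx₁.1]))
  have hup : √(x₁ * y) ≤ √(x₂ * y) := sqrt_le_sqrt (by nlinarith [hy.1])
  have hdown : √((1 - x₂) * (1 - y)) ≤ √((1 - x₁) * (1 - y)) :=
    sqrt_le_sqrt (by nlinarith [hy.2])
  exact pow_le_pow_left₀ hnonneg (by linarith) 2

theorem gMinus_one_sub_self {y : ℝ} (hy : y ∈ Icc (0:ℝ) 1) : gMinus (1 - y) y = 0 := by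
  have hc : 1 - y ∈ Icc (0:ℝ) 1 := ⟨sub_nonneg.2 hy.2, sub_le_self 1 hy.1⟩
  rw [gMinus_eq_sq hc hy, sub_sub_cancel, mul_comm, sub_self, sq, zero_mul]

theorem GMinus_eq_gMinus_max {y : ℝ} (hy : y ∈ Icc (0:ℝ) 1) (x : ℝ) :
    GMinus x y = gMinus (max x (1 - y)) y := by
  by_cases h : x > 1 - y
  · rw [GMinus, if_pos h, max_eq_left h.le]
  · rw [GMinus, if_neg h, max_eq_right (not_lt.1 h), gMinus_one_sub_self hy]

/-- For fixed `y ∈ [0,1]`, the map `x ↦ G₋(x,y)` is convex on `[0,1]`. -/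
theorem stmt2 (y : ℝ) (hy : y ∈ Set.Icc (0:ℝ) 1) :
    ConvexOn ℝ (Set.Icc (0:ℝ) 1) (fun x => GMinus x y) := by
  have hc : 1 - y ∈ Icc (0:ℝ) 1 := ⟨sub_nonneg.2 hy.2, sub_le_self 1 hy.1⟩
  have hconvex : ConvexOn ℝ (Icc (1 - y) 1) fun x => gMinus x y :=
    (convexOn_gMinus hy).subset (Icc_subset_Icc_left hc.1) (convex_Icc _ _)
  refine (hconvex.comp_max_const hc.1 hc.2 (monotoneOn_gMinus hy)).congr fun x _ => ?_
  exact (GMinus_eq_gMinus_max hy x).symm
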